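/- arXiv:2006.00516 — 3 statements merged into one kernel-verified Lean document; each statement's English description precedes it below -/
import Mathlib

section
/- Let n ≥ 3 and p ∈ (0,1). (i) If p ≤ 1/(n−1), then for every integer k with 2 ≤ k ≤ n, the maximum of P_θ(∑_{i=1}^n c_i ≥ k) over all pairwise independent distributions θ with identical marginal probability p equals n(n−1)p^2 / ( k(k−1) ). (ii) If p > 1/(n−1), then for every integer k with ⌈1 + (n−1)p⌉ ≤ k ≤ ⌊ n(n−1)p^2 / (n·p − 1) ⌋, the same maximum equals n(n−1)p^2 / ( k(k−1) ). -/
open Finset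

noncomputable section

/-- Probability that at least `k` of the `n` coordinates equal `1` under the pmf `θ` on `{0,1}^n`. -/
def probGE (n : ℕ) (θ : (Fin n → Bool) → ℝ) (k : ℕ) : ℝ :=
  ∑ c ∈ Finset.univ.filter
      (fun c : Fin n → Bool => k ≤ (Finset.univ.filter (fun i => c i = true)).card), θ c

/-- Probability that all `n` coordinates equal `1` under the pmf `θ` on `{0,1}^n`. -/
def probAll (n : ℕ) (θ : (Fin n → Bool) → ℝ) : ℝ :=
  ∑ c ∈ Finset.univ.filter (fun c : Fin n → Bool => ∀ i, c i = true), θ c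

/-- `θ` is a probability mass function on `{0,1}^n`. -/
def IsDist (n : ℕ) (θ : (Fin n → Bool) → ℝ) : Prop :=
  (∀ c, 0 ≤ θ c) ∧ (∑ c, θ c = 1)

/-- Univariate marginal probability `P_θ(c_i = 1)`. -/
def Marg (n : ℕ) (θ : (Fin n → Bool) → ℝ) (i : Fin n) : ℝ :=
  ∑ c ∈ Finset.univ.filter (fun c : Fin n → Bool => c i = true), θ c

/-- Bivariate probability `P_θ(c_i = 1, c_j = 1)`. -/
def Biv (n : ℕ) (θ : (Fin n → Bool) → ℝ) (i j : Fin n) : ℝ :=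
  ∑ c ∈ Finset.univ.filter (fun c : Fin n → Bool => c i = true ∧ c j = true), θ c

/-- `θ` is a pairwise independent distribution with marginal vector `p`. -/
def PairwiseIndep (n : ℕ) (p : Fin n → ℝ) (θ : (Fin n → Bool) → ℝ) : Prop :=
  IsDist n θ ∧ (∀ i, Marg n θ i = p i) ∧
    (∀ i j : Fin n, i < j → Biv n θ i j = p i * p j)

/-
Upper bound: write `S c` for the number of ones of `c`. Pairwise independence fixes the second
factorial moment, `E[S (S - 1)] = ∑_{i ≠ j} P(c_i = c_j = 1) = n (n - 1) p²`, and since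
`S (S - 1) ≥ k (k - 1)` on `{S ≥ k}`, Markov's inequality gives
`P(S ≥ k) ≤ n (n - 1) p² / (k (k - 1))`.

Attainment: put mass `q = n (n - 1) p² / (k (k - 1))` uniformly on the vectors with `k` ones,
mass `r = n p - k q` uniformly on those with one `1`, and the rest on the zero vector. Being
exchangeable, this distribution has `P(c_i = 1) = (k q + r) / n = p` and
`P(c_i = c_j = 1) = q k (k - 1) / (n (n - 1)) = p²`, and it is a probability distribution
exactly when `r ≥ 0` and `q + r ≤ 1`, i.e. when `(n - 1) p ≤ k - 1` and
`k (n p - 1) ≤ n (n - 1) p²`. Both ranges of `k` in the theorem satisfy these two inequalities.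
-/

def boolFunEquivFinset (α : Type*) [Fintype α] [DecidableEq α] :
    (α → Bool) ≃ Finset α where
  toFun c := univ.filter (fun i => c i = true)
  invFun s i := decide (i ∈ s)
  left_inv c := by funext i; simp
  right_inv s := by ext i; simp

section Reformulation

variable {n : ℕ}

theorem probGE_eq_sum_filter_le_card (θ : (Fin n → Bool) → ℝ) (k : ℕ) :
    probGE n θ k = ∑ c ∈ univ.filter (fun c => k ≤ #(boolFunEquivFinset (Fin n) c)), θ c :=
  rfl

theorem marg_eq_sum_filter_subset (θ : (Fin n → Bool) → ℝ) (i : Fin n) :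
    Marg n θ i = ∑ c ∈ univ.filter (fun c => {i} ⊆ boolFunEquivFinset (Fin n) c), θ c := by
  simp [Marg, boolFunEquivFinset]

theorem biv_eq_sum_filter_subset (θ : (Fin n → Bool) → ℝ) (i j : Fin n) :
    Biv n θ i j
      = ∑ c ∈ univ.filter (fun c => {i, j} ⊆ boolFunEquivFinset (Fin n) c), θ c := by
  simp [Biv, boolFunEquivFinset, insert_subset_iff]

theorem biv_comm (θ : (Fin n → Bool) → ℝ) (i j : Fin n) : Biv n θ i j = Biv n θ j i := by
  simp only [Biv, and_comm]

theorem PairwiseIndep.biv_of_ne {θ : (Fin n → Bool) → ℝ} {p : Fin n → ℝ}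
    (hθ : PairwiseIndep n p θ) {i j : Fin n} (hij : i ≠ j) : Biv n θ i j = p i * p j := by
  rcases hij.lt_or_gt with h | h
  · exact hθ.2.2 i j h
  · rw [biv_comm, hθ.2.2 j i h, mul_comm]

end Reformulation

theorem card_filter_subset_card_eq_mul_choose {α : Type*} [Fintype α] [DecidableEq α]
    (t : Finset α) (m : ℕ) :
    #(univ.filter (fun s => t ⊆ s ∧ #s = m)) * (Fintype.card α).choose #t
      = (Fintype.card α).choose m * m.choose #t := by
  have hfilter :
      univ.filter (fun s => t ⊆ s ∧ #s = m) = (powersetCard m univ).filter (t ⊆ ·) := by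
    ext s; simp [and_comm]
  rcases le_or_gt #t m with htm | hmt
  · rw [hfilter, card_filter_powersetCard_subset t univ m (subset_univ t) htm, card_univ,
      Nat.choose_mul htm, mul_comm]
  · rw [Nat.choose_eq_zero_of_lt hmt, mul_zero, card_eq_zero.2, zero_mul]
    exact filter_false_of_mem fun s _ ⟨hts, hs⟩ => (card_le_card hts).not_gt (hs ▸ hmt)

section LevelUniform

variable {α : Type*} [Fintype α] [DecidableEq α]

variable (α) in
def levelUniform (m : ℕ) (c : α → Bool) : ℝ :=
  if #(boolFunEquivFinset α c) = m then ((Fintype.card α).choose m : ℝ)⁻¹ else 0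

theorem levelUniform_nonneg (m : ℕ) (c : α → Bool) : 0 ≤ levelUniform α m c := by
  unfold levelUniform; positivity

theorem sum_filter_subset_levelUniform {m : ℕ} (hm : m ≤ Fintype.card α) (t : Finset α) :
    ∑ c ∈ univ.filter (fun c => t ⊆ boolFunEquivFinset α c), levelUniform α m c
      = (m.choose #t : ℝ) / (Fintype.card α).choose #t := by
  have hcount : (#(univ.filter (fun s => t ⊆ s ∧ #s = m)) : ℝ) * (Fintype.card α).choose #t
      = (Fintype.card α).choose m * m.choose #t := by
    exact_mod_cast card_filter_subset_card_eq_mul_choose t m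
  have hm0 : ((Fintype.card α).choose m : ℝ) ≠ 0 := by exact_mod_cast (Nat.choose_pos hm).ne'
  have ht0 : ((Fintype.card α).choose #t : ℝ) ≠ 0 := by
    exact_mod_cast (Nat.choose_pos (card_le_univ t)).ne'
  rw [sum_filter, ← (boolFunEquivFinset α).symm.sum_comp]
  simp only [levelUniform, Equiv.apply_symm_apply, ← ite_and, ← sum_filter, sum_const,
    nsmul_eq_mul]
  field_simp
  linear_combination hcount

theorem sum_levelUniform {m : ℕ} (hm : m ≤ Fintype.card α) :
    ∑ c, levelUniform α m c = 1 := by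
  simpa using sum_filter_subset_levelUniform hm ∅

theorem sum_filter_le_card_levelUniform {m : ℕ} (hm : m ≤ Fintype.card α) (k : ℕ) :
    ∑ c ∈ univ.filter (fun c => k ≤ #(boolFunEquivFinset α c)), levelUniform α m c
      = if k ≤ m then 1 else 0 := by
  split_ifs with hkm
  · refine (sum_filter_of_ne fun c _ hc => ?_).trans (sum_levelUniform hm)
    by_contra h
    exact hc (if_neg (by omega))
  · refine sum_eq_zero fun c hc => if_neg ?_
    have := (mem_filter.1 hc).2
    omega

end LevelUniform

section Extremal

variable {n k : ℕ} {p q r : ℝ}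

def extremalDist (n k : ℕ) (q r : ℝ) : (Fin n → Bool) → ℝ :=
  q • levelUniform (Fin n) k + r • levelUniform (Fin n) 1
    + (1 - q - r) • levelUniform (Fin n) 0

theorem sum_extremalDist (s : Finset (Fin n → Bool)) :
    ∑ c ∈ s, extremalDist n k q r c = q * ∑ c ∈ s, levelUniform (Fin n) k c
      + r * ∑ c ∈ s, levelUniform (Fin n) 1 c
      + (1 - q - r) * ∑ c ∈ s, levelUniform (Fin n) 0 c := by
  simp only [extremalDist, Pi.add_apply, Pi.smul_apply, smul_eq_mul, sum_add_distrib, mul_sum]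

theorem pairwiseIndep_extremalDist (hk : 2 ≤ k) (hkn : k ≤ n) (hq : 0 ≤ q) (hr : 0 ≤ r)
    (hqr : q + r ≤ 1) (hmarg : k * q + r = n * p)
    (hbiv : k * (k - 1) * q = n * (n - 1) * p ^ 2) :
    PairwiseIndep n (fun _ => p) (extremalDist n k q r) := by
  have hn : (2 : ℝ) ≤ n := by exact_mod_cast hk.trans hkn
  refine ⟨⟨fun c => ?_, ?_⟩, fun i => ?_, fun i j hij => ?_⟩
  · simp only [extremalDist, Pi.add_apply, Pi.smul_apply, smul_eq_mul]
    have := levelUniform_nonneg k c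
    have := levelUniform_nonneg 1 c
    have := levelUniform_nonneg 0 c
    have : 0 ≤ 1 - q - r := by linarith
    positivity
  · rw [sum_extremalDist, sum_levelUniform (by simpa), sum_levelUniform (by simp; omega),
      sum_levelUniform (by simp)]
    ring
  · rw [marg_eq_sum_filter_subset, sum_extremalDist, sum_filter_subset_levelUniform (by simpa),
      sum_filter_subset_levelUniform (by simp; omega), sum_filter_subset_levelUniform (by simp)]
    simp only [card_singleton, Nat.choose_one_right, Fintype.card_fin, Nat.cast_one, Nat.cast_zero]
    field_simp
    linear_combination hmarg
  · rw [biv_eq_sum_filter_subset, sum_extremalDist, sum_filter_subset_levelUniform (by simpa),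
      sum_filter_subset_levelUniform (by simp; omega), sum_filter_subset_levelUniform (by simp),
      card_pair hij.ne]
    have : (n : ℝ) - 1 ≠ 0 := by linarith
    simp only [Nat.cast_choose_two, Fintype.card_fin, Nat.cast_one, Nat.cast_zero]
    field_simp
    linear_combination hbiv

theorem probGE_extremalDist (hk : 2 ≤ k) (hkn : k ≤ n) :
    probGE n (extremalDist n k q r) k = q := by
  rw [probGE_eq_sum_filter_le_card, sum_extremalDist, sum_filter_le_card_levelUniform (by simpa),
    sum_filter_le_card_levelUniform (by simp; omega), sum_filter_le_card_levelUniform (by simp)]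
  simp [show ¬ k ≤ 1 by omega, show ¬ k ≤ 0 by omega]

end Extremal

section UpperBound

variable {n : ℕ} {θ : (Fin n → Bool) → ℝ}

theorem sum_mul_card_offDiag_eq_sum_biv :
    ∑ c, θ c * #(boolFunEquivFinset (Fin n) c).offDiag
      = ∑ x ∈ (univ : Finset (Fin n)).offDiag, Biv n θ x.1 x.2 := by
  have hcard : ∀ c : Fin n → Bool, (#(boolFunEquivFinset (Fin n) c).offDiag : ℝ)
      = ∑ x ∈ (univ : Finset (Fin n)).offDiag,
          if c x.1 = true ∧ c x.2 = true then 1 else 0 := by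
    intro c
    rw [← natCast_card_filter]
    congr 2
    ext x
    simp only [boolFunEquivFinset, Equiv.coe_fn_mk, mem_offDiag, mem_filter, mem_univ, true_and]
    tauto
  simp only [Biv, sum_filter, hcard, mul_sum, mul_ite, mul_one, mul_zero]
  exact sum_comm

theorem PairwiseIndep.sum_mul_card_offDiag {p : ℝ} (hθ : PairwiseIndep n (fun _ => p) θ) :
    ∑ c, θ c * #(boolFunEquivFinset (Fin n) c).offDiag = n * (n - 1) * p ^ 2 := by
  rw [sum_mul_card_offDiag_eq_sum_biv,
    sum_congr rfl fun x hx => hθ.biv_of_ne (mem_offDiag.1 hx).2.2, sum_const, offDiag_card,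
    card_univ, Fintype.card_fin, nsmul_eq_mul, Nat.cast_sub (Nat.le_mul_self n)]
  push_cast
  ring

theorem mul_probGE_le_sum_mul_card_offDiag (hθ : ∀ c, 0 ≤ θ c) (k : ℕ) :
    ((k * (k - 1) : ℕ) : ℝ) * probGE n θ k
      ≤ ∑ c, θ c * #(boolFunEquivFinset (Fin n) c).offDiag := by
  rw [probGE_eq_sum_filter_le_card, mul_sum]
  calc ∑ c ∈ univ.filter (fun c => k ≤ #(boolFunEquivFinset (Fin n) c)),
        ((k * (k - 1) : ℕ) : ℝ) * θ c
      ≤ ∑ c ∈ univ.filter (fun c => k ≤ #(boolFunEquivFinset (Fin n) c)),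
          θ c * #(boolFunEquivFinset (Fin n) c).offDiag := by
        refine sum_le_sum fun c hc => ?_
        have hkc := (mem_filter.1 hc).2
        rw [mul_comm]
        gcongr
        · exact hθ c
        rw [offDiag_card, ← Nat.mul_sub_one]
        exact Nat.mul_le_mul hkc (Nat.sub_le_sub_right hkc 1)
    _ ≤ ∑ c, θ c * #(boolFunEquivFinset (Fin n) c).offDiag :=
        sum_le_sum_of_subset_of_nonneg (filter_subset _ _) fun c _ _ => by
          have := hθ c; positivity

theorem PairwiseIndep.probGE_le {p : ℝ} (hθ : PairwiseIndep n (fun _ => p) θ) {k : ℕ}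
    (hk : 2 ≤ k) : probGE n θ k ≤ n * (n - 1) * p ^ 2 / (k * (k - 1)) := by
  have hkR : (2 : ℝ) ≤ k := by exact_mod_cast hk
  rw [le_div_iff₀ (by nlinarith), ← hθ.sum_mul_card_offDiag, mul_comm]
  have := mul_probGE_le_sum_mul_card_offDiag hθ.1.1 k
  rwa [Nat.cast_mul, Nat.cast_sub (by omega), Nat.cast_one] at this

end UpperBound

def probGEValues (n : ℕ) (p : ℝ) (k : ℕ) : Set ℝ :=
  {x | ∃ θ : (Fin n → Bool) → ℝ, PairwiseIndep n (fun _ => p) θ ∧ probGE n θ k = x}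

section Maximum

variable {n k : ℕ} {p : ℝ}

theorem isGreatest_probGEValues (hk : 2 ≤ k) (hkn : k ≤ n) (hp : 0 ≤ p)
    (hr : ((n : ℝ) - 1) * p ≤ k - 1) (hqr : (k : ℝ) * (n * p - 1) ≤ n * (n - 1) * p ^ 2) :
    IsGreatest (probGEValues n p k) (n * (n - 1) * p ^ 2 / (k * (k - 1))) := by
  have hkR : (2 : ℝ) ≤ k := by exact_mod_cast hk
  have hnR : (k : ℝ) ≤ n := by exact_mod_cast hkn
  set q : ℝ := n * (n - 1) * p ^ 2 / (k * (k - 1))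
  have hn1 : 0 ≤ (n : ℝ) - 1 := by linarith
  have hkk : 0 < (k : ℝ) * (k - 1) := by nlinarith
  have hq : 0 ≤ q := div_nonneg (by positivity) hkk.le
  have hkq : (k : ℝ) * (k - 1) * q = n * (n - 1) * p ^ 2 := mul_div_cancel₀ _ hkk.ne'
  refine ⟨⟨extremalDist n k q (n * p - k * q), ?_, probGE_extremalDist hk hkn⟩,
    fun x ⟨θ, hθ, hx⟩ => hx ▸ hθ.probGE_le hk⟩
  refine pairwiseIndep_extremalDist hk hkn hq ?_ ?_ (by ring) hkq
  · nlinarith [mul_le_mul_of_nonneg_left hr (by positivity : (0 : ℝ) ≤ n * p)]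
  · nlinarith

theorem isGreatest_probGEValues_of_le_inv (hp0 : 0 ≤ p) (hp : p ≤ 1 / ((n : ℝ) - 1))
    (hk : 2 ≤ k) (hkn : k ≤ n) :
    IsGreatest (probGEValues n p k) (n * (n - 1) * p ^ 2 / (k * (k - 1))) := by
  have hkR : (2 : ℝ) ≤ k := by exact_mod_cast hk
  have hnR : (k : ℝ) ≤ n := by exact_mod_cast hkn
  have hp' : ((n : ℝ) - 1) * p ≤ 1 := by
    rw [le_div_iff₀ (by linarith)] at hp; linarith
  refine isGreatest_probGEValues hk hkn hp0 (by linarith) ?_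
  -- `n * p - 1 - (n - 1) * p ^ 2 = -(1 - p) * (1 - (n - 1) * p) ≤ 0`
  rcases le_or_gt ((n : ℝ) * p) 1 with h | h
  · nlinarith
  · nlinarith [mul_le_mul_of_nonneg_right hnR (by linarith : (0 : ℝ) ≤ n * p - 1),
      mul_nonneg (by linarith : (0 : ℝ) ≤ n)
        (mul_nonneg (by linarith : 0 ≤ 1 - ((n : ℝ) - 1) * p) (by nlinarith : 0 ≤ 1 - p))]

theorem isGreatest_probGEValues_of_inv_lt (hp1 : p < 1) (hp : 1 / ((n : ℝ) - 1) < p)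
    (hceil : ⌈1 + ((n : ℝ) - 1) * p⌉ ≤ (k : ℤ))
    (hfloor : (k : ℤ) ≤ ⌊(n : ℝ) * ((n : ℝ) - 1) * p ^ 2 / ((n : ℝ) * p - 1)⌋) :
    IsGreatest (probGEValues n p k) (n * (n - 1) * p ^ 2 / (k * (k - 1))) := by
  have hcR : 1 + ((n : ℝ) - 1) * p ≤ k := by exact_mod_cast Int.ceil_le.1 hceil
  have hfR : (k : ℝ) ≤ n * (n - 1) * p ^ 2 / (n * p - 1) := by
    exact_mod_cast Int.le_floor.1 hfloor
  have hn : 2 ≤ n := by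
    by_contra! hn
    have : (n : ℝ) * (n - 1) = 0 := by interval_cases n <;> norm_num
    rw [this, zero_mul, zero_div] at hfR
    rw [le_antisymm hfR k.cast_nonneg] at hcR
    interval_cases n
    · norm_num at hcR; linarith
    · norm_num at hcR
  have hnR : (2 : ℝ) ≤ n := by exact_mod_cast hn
  have hp' : 1 < ((n : ℝ) - 1) * p := by
    rwa [div_lt_iff₀ (by linarith), mul_comm] at hp
  have hp0 : 0 < p := by nlinarith
  have hnp : 0 < (n : ℝ) * p - 1 := by linarith
  have hk : 2 ≤ k := by
    have : (2 : ℝ) < k := by linarith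
    exact_mod_cast this.le
  have hkn : k ≤ n := by
    have : (n : ℝ) * (n - 1) * p ^ 2 / (n * p - 1) ≤ n := by
      rw [div_le_iff₀ hnp]
      nlinarith [mul_nonneg (by linarith : (0 : ℝ) ≤ n)
        (mul_nonneg (by linarith : 0 ≤ ((n : ℝ) - 1) * p - 1) (by linarith : 0 ≤ 1 - p))]
    exact_mod_cast hfR.trans this
  exact isGreatest_probGEValues hk hkn hp0.le (by linarith) ((le_div_iff₀ hnp).1 hfR)

end Maximum

theorem stmt_17_general (n : ℕ) (p : ℝ) (hp0 : 0 < p) (hp1 : p < 1) :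
    (p ≤ 1 / ((n : ℝ) - 1) →
      ∀ k : ℕ, 2 ≤ k → k ≤ n →
        IsGreatest
          {x : ℝ | ∃ θ : (Fin n → Bool) → ℝ,
            PairwiseIndep n (fun _ => p) θ ∧ probGE n θ k = x}
          ((n : ℝ) * ((n : ℝ) - 1) * p ^ 2 / ((k : ℝ) * ((k : ℝ) - 1)))) ∧
    (1 / ((n : ℝ) - 1) < p →
      ∀ k : ℕ, ⌈1 + ((n : ℝ) - 1) * p⌉ ≤ (k : ℤ) →
        (k : ℤ) ≤ ⌊(n : ℝ) * ((n : ℝ) - 1) * p ^ 2 / ((n : ℝ) * p - 1)⌋ →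
        IsGreatest
          {x : ℝ | ∃ θ : (Fin n → Bool) → ℝ,
            PairwiseIndep n (fun _ => p) θ ∧ probGE n θ k = x}
          ((n : ℝ) * ((n : ℝ) - 1) * p ^ 2 / ((k : ℝ) * ((k : ℝ) - 1)))) :=
  ⟨fun hp _ hk hkn => isGreatest_probGEValues_of_le_inv hp0.le hp hk hkn,
    fun hp _ hceil hfloor => isGreatest_probGEValues_of_inv_lt hp1 hp hceil hfloor⟩

theorem stmt_17 (n : ℕ) (hn : 3 ≤ n) (p : ℝ) (hp0 : 0 < p) (hp1 : p < 1) :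
    (p ≤ 1 / ((n : ℝ) - 1) →
      ∀ k : ℕ, 2 ≤ k → k ≤ n →
        IsGreatest
          {x : ℝ | ∃ θ : (Fin n → Bool) → ℝ,
            PairwiseIndep n (fun _ => p) θ ∧ probGE n θ k = x}
          ((n : ℝ) * ((n : ℝ) - 1) * p ^ 2 / ((k : ℝ) * ((k : ℝ) - 1)))) ∧
    (1 / ((n : ℝ) - 1) < p →
      ∀ k : ℕ, ⌈1 + ((n : ℝ) - 1) * p⌉ ≤ (k : ℤ) →
        (k : ℤ) ≤ ⌊(n : ℝ) * ((n : ℝ) - 1) * p ^ 2 / ((n : ℝ) * p - 1)⌋ →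
        IsGreatest
          {x : ℝ | ∃ θ : (Fin n → Bool) → ℝ,
            PairwiseIndep n (fun _ => p) θ ∧ probGE n θ k = x}
          ((n : ℝ) * ((n : ℝ) - 1) * p ^ 2 / ((k : ℝ) * ((k : ℝ) - 1)))) :=
  stmt_17_general n p hp0 hp1
end
end

section
/- Let n ≥ 3, let p ∈ (0, 1/(n−1)], let q ∈ (0,1), and let k be an integer with 1 ≤ k ≤ n. Suppose either (a) k ≥ 3 and q ≥ (n−2)p, or (b) p ≤ q < (n−2)p and ⌈ 2 + (n−2)p/q ⌉ ≤ k ≤ n. Then the maximum of P_θ(∑_{i=1}^n c_i ≥ k) over all pairwise independent distributions θ with marginal probabilities p_i = p for i ∈ [n−1] and p_n = q equals C(n−1,2)·p^2 / C(k−1,2), where C(m,2) = m(m−1)/2, and this maximum is attained by some such distribution θ. -/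
/-!
Upper bound: let `N` count the ones among the `n - 1` coordinates of marginal `p`. Pairwise
independence fixes the second factorial moment, `E[N (N - 1)] = (n - 1)(n - 2) p²`, and on the
event `∑ cᵢ ≥ k` we have `N ≥ k - 1`, hence `N (N - 1) ≥ (k - 1)(k - 2)`; Markov's inequality
gives the bound.

Attainment: identify `c` with its support and write `L` for the last coordinate. Put mass `e` on
each `k`-set containing `L`, with `e * C(n - 3, k - 3) = p²`, so that every pair among the other
coordinates already has probability `p²`. The rest of the mass sits on `∅`, `{L}`, the singletons
`{i}` and the pairs `{i, L}`, `i ≠ L`, and is forced by the marginals and the total mass; it is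
nonnegative because `(n - 1) p ≤ 1` and `(n - 2) p ≤ (k - 2) q`, the latter following from either
case of the hypothesis. Only the `k`-sets count towards `∑ cᵢ ≥ k`, and their total mass
`e * C(n - 1, k - 1)` is the bound.
-/

open Finset

noncomputable section

lemma cast_card_offDiag {α : Type*} (t : Finset α) : (#t.offDiag : ℝ) = #t * (#t - 1) := by
  rw [offDiag_card, Nat.cast_sub (Nat.le_mul_self _)]
  push_cast
  ring

lemma mul_sum_filter_le_sum_mul {ι : Type*} [Fintype ι] (P : ι → Prop) [DecidablePred P]
    {w f : ι → ℝ} {a : ℝ} (hw : ∀ s, 0 ≤ w s) (hf : ∀ s, 0 ≤ f s) (ha : ∀ s, P s → a ≤ f s) :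
    a * ∑ s ∈ univ.filter P, w s ≤ ∑ s, w s * f s :=
  calc a * ∑ s ∈ univ.filter P, w s
      = ∑ s ∈ univ.filter P, w s * a := by rw [mul_sum]; simp only [mul_comm]
    _ ≤ ∑ s ∈ univ.filter P, w s * f s :=
        sum_le_sum fun s hs => mul_le_mul_of_nonneg_left (ha s (mem_filter.mp hs).2) (hw s)
    _ ≤ ∑ s, w s * f s :=
        sum_le_sum_of_subset_of_nonneg (filter_subset _ _) fun s _ _ => mul_nonneg (hw s) (hf s)

section Supersets

variable {α : Type*} [DecidableEq α]

def supersets (t A : Finset α) (r : ℕ) : Finset (Finset α) :=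
  (t.powersetCard r).filter (A ⊆ ·)

lemma filter_supersets (t A T : Finset α) (r : ℕ) :
    (supersets t A r).filter (T ⊆ ·) = supersets t (A ∪ T) r := by
  simp only [supersets, filter_filter, union_subset_iff]

lemma card_supersets (t A : Finset α) (r : ℕ) :
    #(supersets t A r) = if A ⊆ t ∧ #A ≤ r then (#t - #A).choose (r - #A) else 0 := by
  split_ifs with h
  · exact card_filter_powersetCard_subset A t r h.1 h.2
  · rw [card_eq_zero, supersets, filter_eq_empty_iff]
    intro s hs hAs
    rw [mem_powersetCard] at hs
    exact h ⟨hAs.trans hs.1, hs.2 ▸ card_le_card hAs⟩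

lemma filter_card_le_supersets_of_lt {t A : Finset α} {r k : ℕ} (h : r < k) :
    (supersets t A r).filter (k ≤ #·) = ∅ := by
  rw [filter_eq_empty_iff]
  intro s hs
  rw [supersets, mem_filter, mem_powersetCard] at hs
  omega

lemma filter_card_le_supersets_self (t A : Finset α) (k : ℕ) :
    (supersets t A k).filter (k ≤ #·) = supersets t A k := by
  rw [filter_eq_self]
  intro s hs
  rw [supersets, mem_filter, mem_powersetCard] at hs
  exact hs.1.2.ge

variable [Fintype α]

lemma sum_filter_indicator (P : Finset α → Prop) [DecidablePred P] (F : Finset (Finset α)) :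
    ∑ s ∈ univ.filter P, (if s ∈ F then (1 : ℝ) else 0) = #(F.filter P) := by
  rw [sum_boole, filter_filter]
  congr 2
  ext s
  simp [and_comm]

def supersetSum (w : Finset α → ℝ) (T : Finset α) : ℝ :=
  ∑ s ∈ univ.filter (T ⊆ ·), w s

lemma supersetSum_empty (w : Finset α → ℝ) : supersetSum w ∅ = ∑ s, w s := by
  simp [supersetSum]

lemma sum_offDiag_supersetSum_pair (w : Finset α → ℝ) (D : Finset α) :
    ∑ z ∈ D.offDiag, supersetSum w {z.1, z.2} = ∑ s, w s * #((s ∩ D).offDiag) := by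
  calc ∑ z ∈ D.offDiag, supersetSum w {z.1, z.2}
      = ∑ s, ∑ _z ∈ (s ∩ D).offDiag, w s := by
        refine sum_comm' fun z s => ?_
        simp only [mem_offDiag, mem_filter, mem_univ, true_and, mem_inter,
          insert_subset_iff, singleton_subset_iff]
        tauto
    _ = ∑ s, w s * #((s ∩ D).offDiag) := by
        simp only [sum_const, nsmul_eq_mul, mul_comm]

end Supersets

section Transfer

@[simps]
def boolArrowEquivFinset (α : Type*) [Fintype α] [DecidableEq α] : (α → Bool) ≃ Finset α where
  toFun c := univ.filter fun i => c i = true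
  invFun s i := decide (i ∈ s)
  left_inv c := by ext i; simp
  right_inv s := by ext i; simp

variable {α : Type*} [Fintype α] [DecidableEq α]

def finsetWeight (θ : (α → Bool) → ℝ) (s : Finset α) : ℝ :=
  θ ((boolArrowEquivFinset α).symm s)

lemma finsetWeight_comp_boolArrowEquivFinset (w : Finset α → ℝ) :
    finsetWeight (w ∘ boolArrowEquivFinset α) = w := by
  ext s
  simp [finsetWeight]

lemma sum_filter_comp_boolArrowEquivFinset (θ : (α → Bool) → ℝ) (P : Finset α → Prop)
    [DecidablePred P] :
    ∑ c ∈ univ.filter (fun c => P (boolArrowEquivFinset α c)), θ c =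
      ∑ s ∈ univ.filter P, finsetWeight θ s := by
  rw [sum_filter, sum_filter, ← (boolArrowEquivFinset α).sum_comp]
  simp only [finsetWeight, Equiv.symm_apply_apply]

variable {n : ℕ} (θ : (Fin n → Bool) → ℝ)

lemma sum_eq_supersetSum_empty : ∑ c, θ c = supersetSum (finsetWeight θ) ∅ := by
  rw [supersetSum_empty]
  simpa using sum_filter_comp_boolArrowEquivFinset θ (fun _ => True)

lemma marg_eq_supersetSum (i : Fin n) : Marg n θ i = supersetSum (finsetWeight θ) {i} := by
  rw [Marg, supersetSum, ← sum_filter_comp_boolArrowEquivFinset]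
  simp

lemma biv_eq_supersetSum (i j : Fin n) :
    Biv n θ i j = supersetSum (finsetWeight θ) {i, j} := by
  rw [Biv, supersetSum, ← sum_filter_comp_boolArrowEquivFinset]
  simp [insert_subset_iff]

lemma probGE_eq_sum_filter (k : ℕ) :
    probGE n θ k = ∑ s ∈ univ.filter (k ≤ #·), finsetWeight θ s :=
  sum_filter_comp_boolArrowEquivFinset θ (k ≤ #·)

end Transfer

section ExtremalWeight

variable {α : Type*} [Fintype α] [DecidableEq α]

def extremalWeight (L : α) (k : ℕ) (a₀ a₁ b₁ b₂ e : ℝ) (s : Finset α) : ℝ :=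
  a₀ * (if s ∈ supersets univ ∅ 0 then 1 else 0) +
  a₁ * (if s ∈ supersets univ {L} 1 then 1 else 0) +
  b₁ * (if s ∈ supersets (univ.erase L) ∅ 1 then 1 else 0) +
  b₂ * (if s ∈ supersets univ {L} 2 then 1 else 0) +
  e * (if s ∈ supersets univ {L} k then 1 else 0)

variable {L : α} {k : ℕ} {a₀ a₁ b₁ b₂ e : ℝ}

lemma extremalWeight_nonneg (ha₀ : 0 ≤ a₀) (ha₁ : 0 ≤ a₁) (hb₁ : 0 ≤ b₁) (hb₂ : 0 ≤ b₂)
    (he : 0 ≤ e) (s : Finset α) : 0 ≤ extremalWeight L k a₀ a₁ b₁ b₂ e s := by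
  unfold extremalWeight
  positivity

lemma sum_filter_extremalWeight (P : Finset α → Prop) [DecidablePred P] :
    ∑ s ∈ univ.filter P, extremalWeight L k a₀ a₁ b₁ b₂ e s =
      a₀ * #((supersets univ ∅ 0).filter P) + a₁ * #((supersets univ {L} 1).filter P) +
      b₁ * #((supersets (univ.erase L) ∅ 1).filter P) +
      b₂ * #((supersets univ {L} 2).filter P) + e * #((supersets univ {L} k).filter P) := by
  simp only [extremalWeight, sum_add_distrib, ← mul_sum, sum_filter_indicator]

lemma supersetSum_extremalWeight (T : Finset α) :
    supersetSum (extremalWeight L k a₀ a₁ b₁ b₂ e) T =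
      a₀ * #(supersets univ T 0) + a₁ * #(supersets univ (insert L T) 1) +
      b₁ * #(supersets (univ.erase L) T 1) +
      b₂ * #(supersets univ (insert L T) 2) + e * #(supersets univ (insert L T) k) := by
  simp only [supersetSum, sum_filter_extremalWeight, filter_supersets, empty_union, ← insert_eq]

variable {m : ℕ}

lemma sum_extremalWeight (hα : Fintype.card α = m + 3) (hk : 3 ≤ k) :
    ∑ s, extremalWeight L k a₀ a₁ b₁ b₂ e s =
      a₀ + a₁ + (m + 2) * b₁ + (m + 2) * b₂ + e * (m + 2).choose (k - 1) := by
  rw [← supersetSum_empty, supersetSum_extremalWeight]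
  simp [card_supersets, hα, card_erase_of_mem, (by omega : 1 ≤ k)]
  ring

lemma supersetSum_extremalWeight_singleton (hα : Fintype.card α = m + 3) (hk : 3 ≤ k)
    {i : α} (hi : i ≠ L) :
    supersetSum (extremalWeight L k a₀ a₁ b₁ b₂ e) {i} =
      b₁ + b₂ + e * (m + 1).choose (k - 2) := by
  rw [supersetSum_extremalWeight]
  simp [card_supersets, hα, card_erase_of_mem, card_insert_of_notMem, hi, hi.symm,
    (by omega : 2 ≤ k)]

lemma supersetSum_extremalWeight_self (hα : Fintype.card α = m + 3) (hk : 3 ≤ k) :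
    supersetSum (extremalWeight L k a₀ a₁ b₁ b₂ e) {L} =
      a₁ + (m + 2) * b₂ + e * (m + 2).choose (k - 1) := by
  rw [supersetSum_extremalWeight]
  simp [card_supersets, hα, (by omega : 1 ≤ k)]
  ring

lemma supersetSum_extremalWeight_pair (hα : Fintype.card α = m + 3) (hk : 3 ≤ k)
    {i j : α} (hi : i ≠ L) (hj : j ≠ L) (hij : i ≠ j) :
    supersetSum (extremalWeight L k a₀ a₁ b₁ b₂ e) {i, j} = e * m.choose (k - 3) := by
  rw [supersetSum_extremalWeight]
  simp [card_supersets, hα, card_insert_of_notMem, hij, hi.symm, hj.symm, hk]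

lemma supersetSum_extremalWeight_pair_self (hα : Fintype.card α = m + 3) (hk : 3 ≤ k)
    {i : α} (hi : i ≠ L) :
    supersetSum (extremalWeight L k a₀ a₁ b₁ b₂ e) {i, L} =
      b₂ + e * (m + 1).choose (k - 2) := by
  rw [supersetSum_extremalWeight]
  simp [card_supersets, hα, card_insert_of_notMem, hi, hi.symm, (by omega : 2 ≤ k)]

lemma sum_filter_card_le_extremalWeight (hα : Fintype.card α = m + 3) (hk : 3 ≤ k) :
    ∑ s ∈ univ.filter (k ≤ #·), extremalWeight L k a₀ a₁ b₁ b₂ e s =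
      e * (m + 2).choose (k - 1) := by
  rw [sum_filter_extremalWeight, filter_card_le_supersets_self,
    filter_card_le_supersets_of_lt (by omega : 0 < k),
    filter_card_le_supersets_of_lt (by omega : 1 < k),
    filter_card_le_supersets_of_lt (by omega : 1 < k),
    filter_card_le_supersets_of_lt (by omega : 2 < k)]
  simp [card_supersets, hα, (by omega : 1 ≤ k)]

end ExtremalWeight

lemma sub_one_mul_sub_two_le_card_offDiag_erase {α : Type*} [DecidableEq α] {s : Finset α}
    {k : ℕ} (a : α) (hk : 2 ≤ k) (hs : k ≤ #s) :
    ((k : ℝ) - 1) * ((k : ℝ) - 2) ≤ #(s.erase a).offDiag := by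
  have h : (k : ℝ) - 1 ≤ #(s.erase a) := by
    have := pred_card_le_card_erase (s := s) (a := a)
    rw [sub_le_iff_le_add]
    exact_mod_cast (by omega : k ≤ #(s.erase a) + 1)
  have hk' : (2 : ℝ) ≤ k := by exact_mod_cast hk
  rw [cast_card_offDiag]
  nlinarith

lemma probGE_le_of_pairwiseIndep {n k : ℕ} {p q : ℝ} {θ : (Fin n → Bool) → ℝ} (L : Fin n)
    (hk : 3 ≤ k) (hθ : PairwiseIndep n (fun i => if i = L then q else p) θ) :
    probGE n θ k ≤
      ((((n : ℝ) - 1) * ((n : ℝ) - 2) / 2 * p ^ 2) / (((k : ℝ) - 1) * ((k : ℝ) - 2) / 2)) := by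
  obtain ⟨⟨hθ0, -⟩, -, hbiv⟩ := hθ
  set D := univ.erase L
  have hpair : ∀ z ∈ D.offDiag, supersetSum (finsetWeight θ) {z.1, z.2} = p ^ 2 := by
    rintro ⟨i, j⟩ hz
    obtain ⟨hi, hj, hij⟩ : i ≠ L ∧ j ≠ L ∧ i ≠ j := by simpa [D] using hz
    rcases hij.lt_or_gt with h | h
    · rw [← biv_eq_supersetSum, hbiv i j h]
      simp [hi, hj, sq]
    · rw [pair_comm, ← biv_eq_supersetSum, hbiv j i h]
      simp [hi, hj, sq]
  have hmoment : ∑ s, finsetWeight θ s * #((s ∩ D).offDiag) =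
      ((n : ℝ) - 1) * ((n : ℝ) - 2) * p ^ 2 := by
    rw [← sum_offDiag_supersetSum_pair, sum_congr rfl hpair, sum_const, nsmul_eq_mul,
      cast_card_offDiag, card_erase_of_mem (mem_univ _), card_univ, Fintype.card_fin,
      Nat.cast_sub L.pos]
    push_cast
    ring
  have hmarkov : ((k : ℝ) - 1) * ((k : ℝ) - 2) * ∑ s ∈ univ.filter (k ≤ #·), finsetWeight θ s ≤
      ∑ s, finsetWeight θ s * #((s ∩ D).offDiag) := by
    refine mul_sum_filter_le_sum_mul _ (fun _ => hθ0 _) (fun _ => Nat.cast_nonneg _) ?_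
    intro s hs
    rw [inter_erase, inter_univ]
    exact sub_one_mul_sub_two_le_card_offDiag_erase L (by omega) hs
  have hk' : (3 : ℝ) ≤ k := by exact_mod_cast hk
  rw [probGE_eq_sum_filter, le_div_iff₀ (by nlinarith)]
  nlinarith

lemma exists_pairwiseIndep_probGE_eq {n k : ℕ} {p q : ℝ} (L : Fin n) (hn : 3 ≤ n) (hk : 3 ≤ k)
    (hkn : k ≤ n) (hp0 : 0 ≤ p) (hp1 : ((n : ℝ) - 1) * p ≤ 1) (hq0 : 0 ≤ q) (hq1 : q ≤ 1)
    (hkey : ((n : ℝ) - 2) * p ≤ q * ((k : ℝ) - 2)) :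
    ∃ θ : (Fin n → Bool) → ℝ, PairwiseIndep n (fun i => if i = L then q else p) θ ∧
      probGE n θ k =
        ((((n : ℝ) - 1) * ((n : ℝ) - 2) / 2 * p ^ 2) / (((k : ℝ) - 1) * ((k : ℝ) - 2) / 2)) := by
  obtain ⟨m, rfl⟩ : ∃ m, n = m + 3 := ⟨n - 3, by omega⟩
  obtain ⟨j, rfl⟩ : ∃ j, k = j + 3 := ⟨k - 3, by omega⟩
  push_cast at hp1 hkey ⊢
  have hα : Fintype.card (Fin (m + 3)) = m + 3 := Fintype.card_fin _
  have h₁ : ((m + 1).choose (j + 1) : ℝ) * (j + 1) = (m + 1) * m.choose j := by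
    exact_mod_cast (Nat.add_one_mul_choose_eq m j).symm
  have h₂ : ((m + 2).choose (j + 2) : ℝ) * (j + 2) = (m + 2) * (m + 1).choose (j + 1) := by
    exact_mod_cast (Nat.add_one_mul_choose_eq (m + 1) (j + 1)).symm
  have hc₀ : 0 < (m.choose j : ℝ) := Nat.cast_pos.mpr (Nat.choose_pos (by omega))
  set c₀ : ℝ := (m.choose j : ℝ)
  set c₁ : ℝ := ((m + 1).choose (j + 1) : ℝ)
  set c₂ : ℝ := ((m + 2).choose (j + 2) : ℝ)
  obtain ⟨e, he₀⟩ : ∃ e : ℝ, e * c₀ = p ^ 2 := ⟨p ^ 2 / c₀, div_mul_cancel₀ _ hc₀.ne'⟩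
  have hchoose : ((m + 2).choose (j + 3 - 1) : ℝ) = c₂ ∧ ((m + 1).choose (j + 3 - 2) : ℝ) = c₁ ∧
      (m.choose (j + 3 - 3) : ℝ) = c₀ := ⟨rfl, rfl, rfl⟩
  have he : 0 ≤ e := by nlinarith
  have hb₂ : 0 ≤ p * q - e * c₁ := by
    have : (p * q - e * c₁) * (j + 1) = p * (q * (j + 1) - (m + 1) * p) := by
      linear_combination (-e) * h₁ - (m + 1) * he₀
    nlinarith
  set w := extremalWeight L (j + 3) ((1 - q) * (1 - (m + 2) * p))
    (q * (1 - (m + 2) * p) + (j + 1) * (e * c₂)) (p * (1 - q)) (p * q - e * c₁) e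
  have hw : finsetWeight (w ∘ boolArrowEquivFinset _) = w :=
    finsetWeight_comp_boolArrowEquivFinset w
  refine ⟨w ∘ boolArrowEquivFinset _, ⟨⟨fun c => ?_, ?_⟩, fun i => ?_, fun i i' hii' => ?_⟩, ?_⟩
  · refine extremalWeight_nonneg ?_ ?_ ?_ hb₂ he _
    · exact mul_nonneg (by linarith) (by linarith)
    · exact add_nonneg (mul_nonneg hq0 (by linarith)) (by positivity)
    · exact mul_nonneg hp0 (by linarith)
  · rw [sum_eq_supersetSum_empty, hw, supersetSum_empty, sum_extremalWeight hα hk, hchoose.1]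
    linear_combination e * h₂
  · dsimp only
    rw [marg_eq_supersetSum, hw]
    split_ifs with hi
    · rw [hi, supersetSum_extremalWeight_self hα hk, hchoose.1]
      linear_combination e * h₂
    · rw [supersetSum_extremalWeight_singleton hα hk hi, hchoose.2.1]
      ring
  · dsimp only
    rw [biv_eq_supersetSum, hw]
    have hii : i ≠ i' := hii'.ne
    rcases eq_or_ne i L with rfl | hi
    · rw [if_pos rfl, if_neg hii.symm, pair_comm,
        supersetSum_extremalWeight_pair_self hα hk hii.symm, hchoose.2.1]
      ring
    rcases eq_or_ne i' L with rfl | hi'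
    · rw [if_neg hi, if_pos rfl, supersetSum_extremalWeight_pair_self hα hk hi, hchoose.2.1]
      ring
    · rw [if_neg hi, if_neg hi', supersetSum_extremalWeight_pair hα hk hi hi' hii, hchoose.2.2]
      linear_combination he₀
  · rw [probGE_eq_sum_filter, hw, sum_filter_card_le_extremalWeight hα hk, hchoose.1]
    rw [eq_div_iff (by ring_nf; positivity)]
    linear_combination (e * (j + 1) * h₂ + e * (m + 2) * h₁ + (m + 2) * (m + 1) * he₀) / 2

lemma three_lt_and_le_mul_sub_two_of_ceil_le {x q : ℝ} {k : ℕ} (hq : 0 < q) (hqx : q < x)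
    (hceil : ⌈2 + x / q⌉ ≤ (k : ℤ)) : 3 < k ∧ x ≤ q * ((k : ℝ) - 2) := by
  have hk : 2 + x / q ≤ k := by exact_mod_cast Int.ceil_le.mp hceil
  have hx : 1 < x / q := (one_lt_div hq).mpr hqx
  refine ⟨by exact_mod_cast (by linarith : (3 : ℝ) < k), ?_⟩
  rw [← div_le_iff₀' hq]
  linarith

theorem stmt_18_general (n k : ℕ) (hn : 3 ≤ n) (hkn : k ≤ n)
    (p q : ℝ) (hp0 : 0 < p) (hp1 : p ≤ 1 / ((n : ℝ) - 1)) (hq0 : 0 < q) (hq1 : q < 1)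
    (hcase : (3 ≤ k ∧ ((n : ℝ) - 2) * p ≤ q) ∨
      (p ≤ q ∧ q < ((n : ℝ) - 2) * p ∧ ⌈2 + ((n : ℝ) - 2) * p / q⌉ ≤ (k : ℤ) ∧ k ≤ n)) :
    IsGreatest
      {x : ℝ | ∃ θ : (Fin n → Bool) → ℝ,
        PairwiseIndep n (fun i : Fin n => if (i : ℕ) < n - 1 then p else q) θ ∧
          probGE n θ k = x}
      ((((n : ℝ) - 1) * ((n : ℝ) - 2) / 2 * p ^ 2) / (((k : ℝ) - 1) * ((k : ℝ) - 2) / 2)) := by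
  obtain ⟨hk, hkey⟩ : 3 ≤ k ∧ ((n : ℝ) - 2) * p ≤ q * ((k : ℝ) - 2) := by
    rcases hcase with ⟨hk, hq⟩ | ⟨-, hqx, hceil, -⟩
    · have : (3 : ℝ) ≤ k := by exact_mod_cast hk
      exact ⟨hk, by nlinarith⟩
    · obtain ⟨hk, hkey⟩ := three_lt_and_le_mul_sub_two_of_ceil_le hq0 hqx hceil
      exact ⟨hk.le, hkey⟩
  have hp1' : ((n : ℝ) - 1) * p ≤ 1 := by
    have : (3 : ℝ) ≤ n := by exact_mod_cast hn
    rw [le_div_iff₀ (by linarith)] at hp1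
    linarith
  set L : Fin n := ⟨n - 1, by omega⟩
  have hmarg : (fun i : Fin n => if (i : ℕ) < n - 1 then p else q) =
      fun i => if i = L then q else p := by
    funext i
    have := i.isLt
    by_cases h : (i : ℕ) < n - 1 <;> simp [h, L, Fin.ext_iff] <;> omega
  rw [hmarg]
  refine ⟨exists_pairwiseIndep_probGE_eq L hn hk hkn hp0.le hp1' hq0.le hq1.le hkey, ?_⟩
  rintro x ⟨θ, hθ, rfl⟩
  exact probGE_le_of_pairwiseIndep L hk hθ

theorem stmt_18 (n k : ℕ) (hn : 3 ≤ n) (hk1 : 1 ≤ k) (hkn : k ≤ n)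
    (p q : ℝ) (hp0 : 0 < p) (hp1 : p ≤ 1 / ((n : ℝ) - 1)) (hq0 : 0 < q) (hq1 : q < 1)
    (hcase : (3 ≤ k ∧ ((n : ℝ) - 2) * p ≤ q) ∨
      (p ≤ q ∧ q < ((n : ℝ) - 2) * p ∧ ⌈2 + ((n : ℝ) - 2) * p / q⌉ ≤ (k : ℤ) ∧ k ≤ n)) :
    IsGreatest
      {x : ℝ | ∃ θ : (Fin n → Bool) → ℝ,
        PairwiseIndep n (fun i : Fin n => if (i : ℕ) < n - 1 then p else q) θ ∧
          probGE n θ k = x}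
      ((((n : ℝ) - 1) * ((n : ℝ) - 2) / 2 * p ^ 2) / (((k : ℝ) - 1) * ((k : ℝ) - 2) / 2)) :=
  stmt_18_general n k hn hkn p q hp0 hp1 hq0 hq1 hcase
end
end

section
/- Let n ≥ 3, let p ∈ (0, 1/(n−1)], and let q be a real with 0 < q < p. Then the maximum of P_θ(∑_{i=1}^n c_i ≥ n) over all pairwise independent distributions θ with marginal probabilities p_i = p for i ∈ [n−1] and p_n = q equals p·q, and this maximum is attained by some such distribution θ. -/
open Finset

noncomputable section


private lemma sum_ind {n : ℕ} (P : (Fin n → Bool) → Prop) [DecidablePred P]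
    (v : Fin n → Bool) (a : ℝ) :
    ∑ c ∈ Finset.univ.filter P, (if c = v then a else 0) = if P v then a else 0 := by
  rw [Finset.sum_ite_eq' (Finset.univ.filter P) v (fun _ => a)]
  simp

/-- the extremal distribution -/
private def theta (n : ℕ) (p q z : ℝ) : (Fin n → Bool) → ℝ := fun c =>
  (if c = (fun _ => true) then p * q else 0)
  + (if c = (fun i : Fin n => decide ((i : ℕ) = n - 1)) then q * (1 - p) else 0)
  + (if c = (fun i : Fin n => decide ((i : ℕ) < n - 1)) then p * (p - q) else 0)
  + (∑ j ∈ Finset.univ.filter (fun j : Fin n => (j : ℕ) < n - 1),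
      if c = (fun i => decide (i = j)) then p * (1 - p) else 0)
  + (if c = (fun _ => false) then z else 0)

private lemma sum_theta (n : ℕ) (p q z : ℝ) (P : (Fin n → Bool) → Prop) [DecidablePred P] :
    ∑ c ∈ Finset.univ.filter P, theta n p q z c =
      (if P (fun _ => true) then p * q else 0)
      + (if P (fun i : Fin n => decide ((i : ℕ) = n - 1)) then q * (1 - p) else 0)
      + (if P (fun i : Fin n => decide ((i : ℕ) < n - 1)) then p * (p - q) else 0)
      + (∑ j ∈ Finset.univ.filter (fun j : Fin n => (j : ℕ) < n - 1),
          if P (fun i => decide (i = j)) then p * (1 - p) else 0)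
      + (if P (fun _ => false) then z else 0) := by
  unfold theta
  rw [Finset.sum_add_distrib, Finset.sum_add_distrib, Finset.sum_add_distrib,
    Finset.sum_add_distrib, sum_ind, sum_ind, sum_ind, sum_ind, Finset.sum_comm]
  congr 2
  exact Finset.sum_congr rfl fun j _ => sum_ind P _ _

theorem stmt_19 (n : ℕ) (hn : 3 ≤ n)
    (p q : ℝ) (hp0 : 0 < p) (hp1 : p ≤ 1 / ((n : ℝ) - 1)) (hq0 : 0 < q) (hqp : q < p) :
    IsGreatest
      {x : ℝ | ∃ θ : (Fin n → Bool) → ℝ,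
        PairwiseIndep n (fun i : Fin n => if (i : ℕ) < n - 1 then p else q) θ ∧
          probAll n θ = x}
      (p * q) := by
  have hn1 : (2:ℝ) ≤ (n:ℝ) - 1 := by
    have : (3:ℝ) ≤ (n:ℝ) := by exact_mod_cast hn
    linarith
  have hcast : ((n - 1 : ℕ) : ℝ) = (n : ℝ) - 1 := by
    have : (1:ℕ) ≤ n := by omega
    push_cast [Nat.cast_sub this]
    ring
  have hp1' : p * ((n:ℝ) - 1) ≤ 1 := by
    rw [le_div_iff₀ (by linarith)] at hp1
    linarith
  have hplt1 : p < 1 := by nlinarith [mul_le_mul_of_nonneg_left hn1 hp0.le]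
  set z : ℝ := 1 - q - ((n:ℝ) - 1) * (p * (1 - p)) - p * (p - q) with hz
  have hz0 : 0 ≤ z := by nlinarith
  have hcard : (Finset.univ.filter (fun j : Fin n => (j : ℕ) < n - 1)).card = n - 1 := by
    have he : Finset.univ.filter (fun j : Fin n => (j : ℕ) < n - 1)
        = Finset.univ.erase ⟨n - 1, by omega⟩ := by
      ext j
      simp only [Finset.mem_filter, Finset.mem_univ, true_and, and_true, Finset.mem_erase, ne_eq,
        Fin.ext_iff, Fin.val_mk]
      have := j.isLt
      omega
    rw [he, Finset.card_erase_of_mem (Finset.mem_univ _), Finset.card_univ, Fintype.card_fin]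
  constructor
  · -- membership: theta attains p*q
    refine ⟨theta n p q z, ⟨⟨?_, ?_⟩, ?_, ?_⟩, ?_⟩
    · -- nonneg
      intro c
      unfold theta
      have hite : ∀ (b : Prop) [Decidable b] (a : ℝ), 0 ≤ a → 0 ≤ if b then a else 0 := by
        intro b _ a ha; split <;> simp [ha]
      refine add_nonneg (add_nonneg (add_nonneg (add_nonneg ?_ ?_) ?_) ?_) ?_
      · exact hite _ _ (by positivity)
      · exact hite _ _ (by nlinarith)
      · exact hite _ _ (by nlinarith)
      · exact Finset.sum_nonneg fun j _ => hite _ _ (by nlinarith)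
      · exact hite _ _ hz0
    · -- sums to 1
      have h := sum_theta n p q z (fun _ => True)
      simp only [Finset.filter_true, if_true] at h
      rw [h, Finset.sum_const, hcard, nsmul_eq_mul, hcast]
      ring
    · -- marginals
      intro i
      have h := sum_theta n p q z (fun c => c i = true)
      unfold Marg
      rw [h]
      simp only [decide_eq_true_eq, if_true, Bool.false_eq_true, if_false]
      rcases Nat.lt_or_ge (i : ℕ) (n - 1) with hi | hi
      · rw [if_pos hi, if_neg (by omega), if_pos hi]
        have hs : (∑ j ∈ Finset.univ.filter (fun j : Fin n => (j : ℕ) < n - 1),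
            if i = j then p * (1 - p) else 0) = p * (1 - p) := by
          rw [Finset.sum_ite_eq (Finset.univ.filter (fun j : Fin n => (j : ℕ) < n - 1)) i
            (fun _ => p * (1 - p))]
          rw [if_pos (by simp [hi])]
        rw [hs]; ring
      · have hieq : (i : ℕ) = n - 1 := by have := i.isLt; omega
        rw [if_pos hieq, if_neg (show ¬ (i : ℕ) < n - 1 by omega),
          if_neg (show ¬ (i : ℕ) < n - 1 by omega)]
        have hs : (∑ j ∈ Finset.univ.filter (fun j : Fin n => (j : ℕ) < n - 1),
            if i = j then p * (1 - p) else 0) = 0 := by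
          apply Finset.sum_eq_zero
          intro j hj
          simp only [Finset.mem_filter, Finset.mem_univ, true_and] at hj
          rw [if_neg]
          intro he; rw [he] at hieq; omega
        rw [hs]; ring
    · -- bivariates
      intro i j hij
      have hij' : (i : ℕ) < (j : ℕ) := hij
      have hji := j.isLt
      have hi : (i : ℕ) < n - 1 := by omega
      have h := sum_theta n p q z (fun c => c i = true ∧ c j = true)
      unfold Biv
      rw [h]
      simp only [decide_eq_true_eq]
      have hs : (∑ k ∈ Finset.univ.filter (fun k : Fin n => (k : ℕ) < n - 1),
          if i = k ∧ j = k then p * (1 - p) else 0) = 0 := by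
        apply Finset.sum_eq_zero
        intro k _
        rw [if_neg]
        rintro ⟨h1, h2⟩
        rw [← h2] at h1
        exact absurd (congrArg Fin.val h1) (by omega)
      rw [hs]
      rcases Nat.lt_or_ge (j : ℕ) (n - 1) with hj | hj
      · rw [if_pos (show True ∧ True from ⟨trivial, trivial⟩),
          if_neg (show ¬ ((i : ℕ) = n - 1 ∧ (j : ℕ) = n - 1) by omega),
          if_pos (show (i : ℕ) < n - 1 ∧ (j : ℕ) < n - 1 from ⟨hi, hj⟩),
          if_neg (show ¬ (false = true ∧ false = true) by simp), if_pos hi, if_pos hj]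
        ring
      · have hjeq : (j : ℕ) = n - 1 := by omega
        rw [if_pos (show True ∧ True from ⟨trivial, trivial⟩),
          if_neg (show ¬ ((i : ℕ) = n - 1 ∧ (j : ℕ) = n - 1) by omega),
          if_neg (show ¬ ((i : ℕ) < n - 1 ∧ (j : ℕ) < n - 1) by omega),
          if_neg (show ¬ (false = true ∧ false = true) by simp), if_pos hi,
          if_neg (show ¬ (j : ℕ) < n - 1 by omega)]
        ring
    · -- probAll = p*q
      have h := sum_theta n p q z (fun c => ∀ i, c i = true)
      unfold probAll
      rw [h]
      have h1 : (∀ i : Fin n, (fun _ : Fin n => true) i = true) := fun _ => rfl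
      have h2 : ¬ (∀ i : Fin n, decide ((i : ℕ) = n - 1) = true) := by
        intro hc
        have := hc ⟨0, by omega⟩
        simp only [decide_eq_true_eq] at this
        omega
      have h3 : ¬ (∀ i : Fin n, decide ((i : ℕ) < n - 1) = true) := by
        intro hc
        have := hc ⟨n - 1, by omega⟩
        simp only [decide_eq_true_eq] at this
        omega
      have h5 : ¬ (∀ i : Fin n, (fun _ : Fin n => false) i = true) := by
        intro hc
        exact absurd (hc ⟨0, by omega⟩) (by simp)
      rw [if_pos h1, if_neg h2, if_neg h3, if_neg h5]
      have hs : (∑ k ∈ Finset.univ.filter (fun k : Fin n => (k : ℕ) < n - 1),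
          if (∀ i : Fin n, decide (i = k) = true) then p * (1 - p) else 0) = 0 := by
        apply Finset.sum_eq_zero
        intro k hk
        simp only [Finset.mem_filter, Finset.mem_univ, true_and] at hk
        rw [if_neg]
        intro hc
        have := hc ⟨n - 1, by omega⟩
        simp only [decide_eq_true_eq, Fin.ext_iff] at this
        omega
      rw [hs]; ring
  · -- upper bound
    rintro x ⟨θ, ⟨⟨hnn, _⟩, _, hbiv⟩, rfl⟩
    set i₀ : Fin n := ⟨0, by omega⟩
    set l : Fin n := ⟨n - 1, by omega⟩
    have hlt : i₀ < l := by
      simp only [Fin.lt_def, i₀, l]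
      omega
    have hb := hbiv i₀ l hlt
    have hb' : Biv n θ i₀ l = p * q := by
      rw [hb]
      simp only [i₀, l]
      rw [if_pos (by omega), if_neg (by omega)]
    rw [← hb']
    unfold probAll Biv
    apply Finset.sum_le_sum_of_subset_of_nonneg
    · intro c hc
      simp only [Finset.mem_filter, Finset.mem_univ, true_and] at hc ⊢
      exact ⟨hc i₀, hc l⟩
    · intro c _ _
      exact hnn c

end
end
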